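/- Let a,b>0 and let (γ,δ)∈ℝ² satisfy γ ≥ −2/a, δ ≤ 2/b and γ−δ ≤ 2. Then the unique smooth solution (u,v) on ℂ∖{0} of the system Δu = 4(e^{au} − e^{v−u}), Δv = 4(e^{v−u} − e^{−bv}) with asymptotic data (γ,δ) is radial: u(z) = u(z') and v(z) = v(z') whenever |z| = |z'|, i.e. u and v depend only on |z|. -/

import Mathlib

/-!
Radial symmetry is a consequence of uniqueness: a rotation `z ↦ ωz` maps solutions to solutions
(the Laplacian is rotation invariant) without changing the asymptotic data.

Uniqueness comes from a maximum principle for the cooperative system. For two solutions with the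
same data, `w₁ = u₁ - u₂` and `w₂ = v₁ - v₂` satisfy, by monotonicity of `exp`,
`Δw₁ > 0` wherever `w₁ > 0` and `w₁ ≥ w₂`, and `Δw₂ > 0` wherever `w₂ > 0` and `w₂ ≥ w₁`.
Both vanish at `∞` and are `o(log |z|)` at `0`, so after adding the harmonic barrier `ε log |z|`
the function `max(w₁, w₂) + ε log |z|` tends to `-∞` at `0` and is small on a large circle.
At an interior maximum the larger of `w₁, w₂` would be positive, contradicting `Δ ≤ 0` there.
Letting `ε → 0` gives `w₁, w₂ ≤ 0`, and exchanging the solutions gives equality.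
-/

open Filter

/-- The Euclidean Laplacian of `f : ℂ → ℝ`, viewing `ℂ ≅ ℝ²` with orthonormal
directions `1` and `I`. -/
noncomputable def lap (f : ℂ → ℝ) (z : ℂ) : ℝ :=
  iteratedFDeriv ℝ 2 f z ![1, 1] + iteratedFDeriv ℝ 2 f z ![Complex.I, Complex.I]

/-- `f` is smooth on `ℂ ∖ {0}`. -/
def SmoothOffZero (f : ℂ → ℝ) : Prop := ContDiffOn ℝ (⊤ : ℕ∞) f {(0 : ℂ)}ᶜ

/-- `f z → 0` as `|z| → ∞`. -/
def TendstoZeroAtInfty (f : ℂ → ℝ) : Prop :=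
  Tendsto f (comap (fun z : ℂ => ‖z‖) atTop) (nhds 0)

/-- `f z / log |z| → γ` as `z → 0`. -/
def LogAsymAtZero (γ : ℝ) (f : ℂ → ℝ) : Prop :=
  Tendsto (fun z : ℂ => f z / Real.log ‖z‖) (nhdsWithin 0 {(0 : ℂ)}ᶜ) (nhds γ)

/-- `(u, v)` is a smooth solution on `ℂ ∖ {0}` of the two-function tt*-Toda system
`Δu = 4(e^{au} − e^{v−u})`, `Δv = 4(e^{v−u} − e^{−bv})`. -/
def IsTodaSol (a b : ℝ) (u v : ℂ → ℝ) : Prop :=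
  SmoothOffZero u ∧ SmoothOffZero v ∧
  ∀ z : ℂ, z ≠ 0 →
    lap u z = 4 * (Real.exp (a * u z) - Real.exp (v z - u z)) ∧
    lap v z = 4 * (Real.exp (v z - u z) - Real.exp (-(b * v z)))

/-- `(u, v)` has asymptotic data `(γ, δ)`: `u, v → 0` at `∞` and
`u(z)/log|z| → γ`, `v(z)/log|z| → δ` at `0`. -/
def HasAsymData (γ δ : ℝ) (u v : ℂ → ℝ) : Prop :=
  TendstoZeroAtInfty u ∧ TendstoZeroAtInfty v ∧ LogAsymAtZero γ u ∧ LogAsymAtZero δ v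

open Topology Laplacian InnerProductSpace

theorem IsLocalMax.iteratedDeriv_two_nonpos {g : ℝ → ℝ} {t : ℝ} (hmax : IsLocalMax g t)
    (hg : ContinuousAt g t) : iteratedDeriv 2 g t ≤ 0 := by
  by_contra! hpos
  rw [iteratedDeriv_succ, iteratedDeriv_one] at hpos
  have hmin : IsLocalMin g t := isLocalMin_of_deriv_deriv_pos hpos hmax.deriv_eq_zero hg
  have hconst : g =ᶠ[𝓝 t] fun _ => g t := by
    filter_upwards [hmin, hmax] with s hs hs' using le_antisymm hs' hs
  simp [hconst.deriv.deriv_eq] at hpos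

theorem IsLocalMax.iteratedFDeriv_two_nonpos {E : Type*} [NormedAddCommGroup E] [NormedSpace ℝ E]
    {f : E → ℝ} {x : E} (hmax : IsLocalMax f x) (hf : ContDiffAt ℝ 2 f x) (v : E) :
    iteratedFDeriv ℝ 2 f x ![v, v] ≤ 0 := by
  set line : ℝ → E := fun t => x + t • v
  have hline0 : line 0 = x := by simp [line]
  have hderiv_line : deriv line = fun _ => v := funext fun t => by
    simpa [line] using (((hasDerivAt_id t).smul_const v).const_add x).deriv
  have hderiv : deriv line 0 = v := by rw [hderiv_line]
  have hderiv2 : iteratedDeriv 2 line 0 = 0 := by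
    simp [iteratedDeriv_succ, hderiv_line]
  have hvv : ![v, v] = fun _ => deriv line 0 := by
    ext i; fin_cases i <;> simp [hderiv]
  have hcomp := iteratedDeriv_vcomp_two (x := 0) (hline0 ▸ hf)
    (show ContDiff ℝ 2 line by fun_prop).contDiffAt
  rw [hline0, hderiv2, map_zero, add_zero] at hcomp
  rw [hvv, ← hcomp]
  refine IsLocalMax.iteratedDeriv_two_nonpos ?_ ((hline0 ▸ hf.continuousAt).comp ?_)
  · exact (hline0 ▸ hmax).comp_continuous (by fun_prop)
  · exact (show Continuous line by fun_prop).continuousAt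

theorem IsLocalMax.laplacian_nonpos {E : Type*} [NormedAddCommGroup E] [InnerProductSpace ℝ E]
    [FiniteDimensional ℝ E] {f : E → ℝ} {x : E} (hmax : IsLocalMax f x) (hf : ContDiffAt ℝ 2 f x) :
    Δ f x ≤ 0 := by
  rw [laplacian_eq_iteratedFDeriv_stdOrthonormalBasis]
  exact Finset.sum_nonpos fun i _ => hmax.iteratedFDeriv_two_nonpos hf _

theorem laplacian_comp_linearIsometryEquiv {E F : Type*} [NormedAddCommGroup E]
    [InnerProductSpace ℝ E] [FiniteDimensional ℝ E] [NormedAddCommGroup F] [NormedSpace ℝ F]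
    (f : E → F) (L : E ≃ₗᵢ[ℝ] E) (x : E) : Δ (f ∘ L) x = Δ f (L x) := by
  have hcomp := L.toContinuousLinearEquiv.iteratedFDerivWithin_comp_right f uniqueDiffOn_univ
    (Set.mem_univ (L x)) 2
  simp only [Set.preimage_univ, iteratedFDerivWithin_univ,
    LinearIsometryEquiv.coe_toContinuousLinearEquiv] at hcomp
  rw [laplacian_eq_iteratedFDeriv_stdOrthonormalBasis,
    laplacian_eq_iteratedFDeriv_orthonormalBasis f ((stdOrthonormalBasis ℝ E).map L)]
  simp only [hcomp, ContinuousMultilinearMap.compContinuousLinearMap_apply]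
  refine Finset.sum_congr rfl fun i _ => congrArg _ (funext fun j => ?_)
  fin_cases j <;> rfl

theorem IsCompact.exists_isLocalMax_of_lt {X : Type*} [TopologicalSpace X] {K U : Set X}
    {g : X → ℝ} (hK : IsCompact K) (hU : IsOpen U) (hUK : U ⊆ K) (hg : ContinuousOn g K)
    {x : X} (hx : x ∈ U) (hlt : ∀ y ∈ K \ U, g y < g x) :
    ∃ y ∈ U, IsLocalMax g y ∧ g x ≤ g y := by
  obtain ⟨y, hyK, hymax⟩ := hK.exists_isMaxOn ⟨x, hUK hx⟩ hg
  have hyU : y ∈ U := by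
    by_contra hyU
    exact (hlt y ⟨hyK, hyU⟩).not_ge (hymax (hUK hx))
  exact ⟨y, hyU, hymax.isLocalMax (mem_of_superset (hU.mem_nhds hyU) hUK), hymax (hUK hx)⟩

theorem exists_isLocalMax_of_tendsto_atBot {g : ℂ → ℝ} (hg : ContinuousOn g {0}ᶜ)
    (hg₀ : Tendsto g (𝓝[≠] 0) atBot) {z : ℂ} (hz : z ≠ 0) {R : ℝ} (hzR : ‖z‖ < R)
    (hR : ∀ y : ℂ, ‖y‖ = R → g y < g z) :
    ∃ y : ℂ, y ≠ 0 ∧ ‖y‖ < R ∧ IsLocalMax g y ∧ g z ≤ g y := by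
  obtain ⟨δ, hδ, hsmall⟩ := Metric.eventually_nhds_iff.1
    (eventually_nhdsWithin_iff.1 (hg₀.eventually (eventually_lt_atBot (g z))))
  set r := min (δ / 2) (‖z‖ / 2)
  have hr : 0 < r := lt_min (half_pos hδ) (half_pos (norm_pos_iff.2 hz))
  have hrz : r < ‖z‖ := (min_le_right _ _).trans_lt (half_lt_self (norm_pos_iff.2 hz))
  have hK : IsCompact ((‖·‖) ⁻¹' Set.Icc r R : Set ℂ) :=
    (isCompact_closedBall (0 : ℂ) R).of_isClosed_subset
      (isClosed_Icc.preimage continuous_norm) fun y hy => by simpa using hy.2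
  have hne : ∀ y : ℂ, r ≤ ‖y‖ → y ≠ 0 := fun y hy => norm_pos_iff.1 (hr.trans_le hy)
  have hboundary : ∀ y ∈ (‖·‖) ⁻¹' Set.Icc r R \ (‖·‖) ⁻¹' Set.Ioo r R, g y < g z := by
    rintro y ⟨⟨hry, hyR⟩, hyU⟩
    dsimp only at hry hyR
    rcases hry.eq_or_lt with hry | hry
    · refine hsmall ?_ (hne y hry.le)
      rw [dist_zero_right, ← hry]
      exact (min_le_left _ _).trans_lt (half_lt_self hδ)
    · exact hR y (hyR.eq_of_not_lt fun h => hyU ⟨hry, h⟩)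
  obtain ⟨y, ⟨hry, hyR⟩, hmax, hle⟩ := hK.exists_isLocalMax_of_lt
    (isOpen_Ioo.preimage continuous_norm) (Set.preimage_mono Set.Ioo_subset_Icc_self)
    (hg.mono fun y hy => hne y hy.1) ⟨hrz, hzR⟩ hboundary
  exact ⟨y, hne y hry.le, hyR, hmax, hle⟩

theorem TendstoZeroAtInfty.sub {f g : ℂ → ℝ} (hf : TendstoZeroAtInfty f)
    (hg : TendstoZeroAtInfty g) : TendstoZeroAtInfty (f - g) := by
  have h := Filter.Tendsto.sub hf hg
  rwa [sub_zero] at h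

theorem TendstoZeroAtInfty.exists_forall_le_norm_lt {f : ℂ → ℝ} (hf : TendstoZeroAtInfty f)
    {η : ℝ} (hη : 0 < η) : ∃ R : ℝ, ∀ y : ℂ, R ≤ ‖y‖ → f y < η := by
  obtain ⟨R, -, hR⟩ :=
    (atTop_basis.comap (‖·‖)).eventually_iff.1 (hf.eventually (eventually_lt_nhds hη))
  exact ⟨R, fun y hy => hR hy⟩

theorem LogAsymAtZero.sub {γ δ : ℝ} {f g : ℂ → ℝ} (hf : LogAsymAtZero γ f)
    (hg : LogAsymAtZero δ g) : LogAsymAtZero (γ - δ) (f - g) :=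
  (Filter.Tendsto.sub hf hg).congr fun _ => (sub_div _ _ _).symm

theorem tendsto_log_norm_nhdsNE_zero :
    Tendsto (fun z : ℂ => Real.log ‖z‖) (𝓝[≠] 0) atBot :=
  Real.tendsto_log_nhdsGT_zero.comp tendsto_norm_nhdsNE_zero

theorem LogAsymAtZero.tendsto_add_mul_log_atBot {γ ε : ℝ} {f : ℂ → ℝ} (hf : LogAsymAtZero γ f)
    (hγε : 0 < γ + ε) : Tendsto (fun z => f z + ε * Real.log ‖z‖) (𝓝[≠] 0) atBot := by
  refine (tendsto_log_norm_nhdsNE_zero.atBot_mul_pos hγε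
    (Filter.Tendsto.add_const ε hf)).congr' ?_
  filter_upwards [tendsto_log_norm_nhdsNE_zero.eventually (eventually_lt_atBot 0)] with z hz
  rw [mul_add, mul_div_cancel₀ _ hz.ne]
  ring

theorem nonpos_of_isLocalMax_max_add_mul_log {w₁ w₂ : ℂ → ℝ} {z : ℂ} {ε : ℝ} (hz : z ≠ 0)
    (hw₁ : ContDiffAt ℝ 2 w₁ z) (hΔ : 0 < w₁ z → w₂ z ≤ w₁ z → 0 < Δ w₁ z)
    (hmax : IsLocalMax (fun y => max (w₁ y) (w₂ y) + ε * Real.log ‖y‖) z)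
    (hle : w₂ z ≤ w₁ z) : w₁ z ≤ 0 := by
  set ℓ : ℂ → ℝ := fun y => Real.log ‖y‖
  have hharm : HarmonicAt ℓ z := analyticAt_id.harmonicAt_log_norm hz
  have hℓ : ContDiffAt ℝ 2 (ε • ℓ) z := hharm.1.const_smul ε
  have hmax₁ : IsLocalMax (w₁ + ε • ℓ) z := by
    filter_upwards [hmax] with y hy
    simp only [Pi.add_apply, Pi.smul_apply, smul_eq_mul, max_eq_left hle] at hy ⊢
    linarith [le_max_left (w₁ y) (w₂ y)]
  have hΔ₁ := hmax₁.laplacian_nonpos (hw₁.add hℓ)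
  rw [hw₁.laplacian_add hℓ, laplacian_smul ε hharm.1, hharm.2.eq_of_nhds,
    Pi.zero_apply, smul_zero, add_zero] at hΔ₁
  by_contra! hpos
  exact (hΔ hpos hle).not_ge hΔ₁

theorem max_nonpos_of_isLocalMax_max_add_mul_log {w₁ w₂ : ℂ → ℝ} {z : ℂ} {ε : ℝ} (hz : z ≠ 0)
    (hw₁ : ContDiffAt ℝ 2 w₁ z) (hw₂ : ContDiffAt ℝ 2 w₂ z)
    (hΔ₁ : 0 < w₁ z → w₂ z ≤ w₁ z → 0 < Δ w₁ z) (hΔ₂ : 0 < w₂ z → w₁ z ≤ w₂ z → 0 < Δ w₂ z)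
    (hmax : IsLocalMax (fun y => max (w₁ y) (w₂ y) + ε * Real.log ‖y‖) z) :
    max (w₁ z) (w₂ z) ≤ 0 := by
  rcases le_total (w₂ z) (w₁ z) with hle | hle
  · exact max_le (nonpos_of_isLocalMax_max_add_mul_log hz hw₁ hΔ₁ hmax hle) (hle.trans
      (nonpos_of_isLocalMax_max_add_mul_log hz hw₁ hΔ₁ hmax hle))
  · simp_rw [max_comm (w₁ _)] at hmax
    have h₂ := nonpos_of_isLocalMax_max_add_mul_log hz hw₂ hΔ₂ hmax hle
    exact max_le (hle.trans h₂) h₂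

theorem exists_pos_mul_lt_and_mul_lt (a b : ℝ) {η : ℝ} (hη : 0 < η) :
    ∃ ε > 0, ε * a < η ∧ ε * b < η := by
  have hsmall : ∀ c : ℝ, ∀ᶠ ε in 𝓝 (0 : ℝ), ε * c < η := fun c =>
    ((continuous_mul_const c).tendsto' 0 0 (zero_mul c)).eventually (eventually_lt_nhds hη)
  exact (eventually_mem_nhdsWithin.and (nhdsWithin_le_nhds
    ((hsmall a).and (hsmall b)))).exists (f := 𝓝[>] (0 : ℝ))

theorem max_nonpos_of_laplacian_pos {w₁ w₂ : ℂ → ℝ}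
    (hw₁ : ContDiffOn ℝ 2 w₁ {0}ᶜ) (hw₂ : ContDiffOn ℝ 2 w₂ {0}ᶜ)
    (hΔ₁ : ∀ z ≠ 0, 0 < w₁ z → w₂ z ≤ w₁ z → 0 < Δ w₁ z)
    (hΔ₂ : ∀ z ≠ 0, 0 < w₂ z → w₁ z ≤ w₂ z → 0 < Δ w₂ z)
    (hinf₁ : TendstoZeroAtInfty w₁) (hinf₂ : TendstoZeroAtInfty w₂)
    (hzero₁ : LogAsymAtZero 0 w₁) (hzero₂ : LogAsymAtZero 0 w₂) {z : ℂ} (hz : z ≠ 0) :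
    max (w₁ z) (w₂ z) ≤ 0 := by
  by_contra! hpos
  set η := max (w₁ z) (w₂ z) / 3 with hη_def
  have hη : 0 < η := by positivity
  obtain ⟨R₁, hR₁⟩ := hinf₁.exists_forall_le_norm_lt hη
  obtain ⟨R₂, hR₂⟩ := hinf₂.exists_forall_le_norm_lt hη
  set R := max (max R₁ R₂) (‖z‖ + 1)
  have hzR : ‖z‖ < R := (lt_add_one _).trans_le (le_max_right _ _)
  obtain ⟨ε, hε, hεR, hεz⟩ := exists_pos_mul_lt_and_mul_lt |Real.log R| |Real.log ‖z‖| hη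
  set g : ℂ → ℝ := fun y => max (w₁ y) (w₂ y) + ε * Real.log ‖y‖
  have hgz : 2 * η < g z := by
    have := neg_abs_le (Real.log ‖z‖)
    nlinarith
  have hg₀ : Tendsto g (𝓝[≠] 0) atBot := by
    refine (tendsto_sup_atBot _ (hzero₁.tendsto_add_mul_log_atBot (by simpa using hε))
      (hzero₂.tendsto_add_mul_log_atBot (by simpa using hε))).congr fun y => ?_
    exact max_add_add_right _ _ _
  have hgR : ∀ y : ℂ, ‖y‖ = R → g y < g z := by
    intro y hy
    have hmax_y : max (w₁ y) (w₂ y) < η :=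
      max_lt (hR₁ y (hy ▸ (le_max_left _ _).trans (le_max_left _ _)))
        (hR₂ y (hy ▸ (le_max_right _ _).trans (le_max_left _ _)))
    have := le_abs_self (Real.log R)
    simp only [g, hy] at hgz ⊢
    nlinarith
  have hgcont : ContinuousOn g {0}ᶜ :=
    ((ContinuousOn.sup hw₁.continuousOn hw₂.continuousOn).add
      (continuousOn_const.mul (Real.continuousOn_log.comp continuous_norm.continuousOn
        fun y hy => norm_ne_zero_iff.2 hy)))
  obtain ⟨y, hy, hyR, hmax, hzy⟩ := exists_isLocalMax_of_tendsto_atBot hgcont hg₀ hz hzR hgR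
  have hy_nhds := isOpen_compl_singleton.mem_nhds hy
  have hmax_y := max_nonpos_of_isLocalMax_max_add_mul_log hy (hw₁.contDiffAt hy_nhds)
    (hw₂.contDiffAt hy_nhds) (hΔ₁ y hy) (hΔ₂ y hy) hmax
  have hlog_y : Real.log ‖y‖ ≤ |Real.log R| :=
    (Real.log_le_log (norm_pos_iff.2 hy) hyR.le).trans (le_abs_self _)
  have : g y < η := by
    simp only [g]
    nlinarith
  linarith

theorem lap_eq_laplacian (f : ℂ → ℝ) : lap f = Δ f := by
  rw [laplacian_eq_iteratedFDeriv_complexPlane]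
  rfl

theorem lap_comp_linearIsometryEquiv (f : ℂ → ℝ) (L : ℂ ≃ₗᵢ[ℝ] ℂ) (z : ℂ) :
    lap (f ∘ L) z = lap f (L z) := by
  simp only [lap_eq_laplacian]
  exact laplacian_comp_linearIsometryEquiv f L z

theorem SmoothOffZero.contDiffOn_two {f : ℂ → ℝ} (hf : SmoothOffZero f) :
    ContDiffOn ℝ 2 f {0}ᶜ :=
  hf.of_le (WithTop.coe_le_coe.2 le_top)

theorem SmoothOffZero.contDiffAt_two {f : ℂ → ℝ} (hf : SmoothOffZero f) {z : ℂ} (hz : z ≠ 0) :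
    ContDiffAt ℝ 2 f z :=
  hf.contDiffOn_two.contDiffAt (isOpen_compl_singleton.mem_nhds hz)

section Toda

variable {a b : ℝ} {u₁ v₁ u₂ v₂ : ℂ → ℝ}

theorem IsTodaSol.laplacian_sub_fst_pos (ha : 0 < a) (h₁ : IsTodaSol a b u₁ v₁)
    (h₂ : IsTodaSol a b u₂ v₂) {z : ℂ} (hz : z ≠ 0) (hu : 0 < (u₁ - u₂) z)
    (hvu : (v₁ - v₂) z ≤ (u₁ - u₂) z) : 0 < Δ (u₁ - u₂) z := by
  simp only [Pi.sub_apply] at hu hvu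
  rw [(h₁.1.contDiffAt_two hz).laplacian_sub (h₂.1.contDiffAt_two hz), ← lap_eq_laplacian,
    ← lap_eq_laplacian, (h₁.2.2 z hz).1, (h₂.2.2 z hz).1]
  have := Real.exp_lt_exp.2 (mul_lt_mul_of_pos_left (sub_pos.1 hu) ha)
  have := Real.exp_le_exp.2 (show v₁ z - u₁ z ≤ v₂ z - u₂ z by linarith)
  linarith

theorem IsTodaSol.laplacian_sub_snd_pos (hb : 0 < b) (h₁ : IsTodaSol a b u₁ v₁)
    (h₂ : IsTodaSol a b u₂ v₂) {z : ℂ} (hz : z ≠ 0) (hv : 0 < (v₁ - v₂) z)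
    (huv : (u₁ - u₂) z ≤ (v₁ - v₂) z) : 0 < Δ (v₁ - v₂) z := by
  simp only [Pi.sub_apply] at hv huv
  rw [(h₁.2.1.contDiffAt_two hz).laplacian_sub (h₂.2.1.contDiffAt_two hz), ← lap_eq_laplacian,
    ← lap_eq_laplacian, (h₁.2.2 z hz).2, (h₂.2.2 z hz).2]
  have := Real.exp_le_exp.2 (show v₂ z - u₂ z ≤ v₁ z - u₁ z by linarith)
  have := Real.exp_lt_exp.2 (neg_lt_neg (mul_lt_mul_of_pos_left (sub_pos.1 hv) hb))
  linarith

theorem IsTodaSol.le_of_hasAsymData {γ δ : ℝ} (ha : 0 < a) (hb : 0 < b)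
    (h₁ : IsTodaSol a b u₁ v₁) (h₂ : IsTodaSol a b u₂ v₂)
    (hd₁ : HasAsymData γ δ u₁ v₁) (hd₂ : HasAsymData γ δ u₂ v₂) {z : ℂ} (hz : z ≠ 0) :
    u₁ z ≤ u₂ z ∧ v₁ z ≤ v₂ z := by
  have hzero₁ := hd₁.2.2.1.sub hd₂.2.2.1
  have hzero₂ := hd₁.2.2.2.sub hd₂.2.2.2
  rw [sub_self] at hzero₁ hzero₂
  have h := max_nonpos_of_laplacian_pos
    (h₁.1.contDiffOn_two.sub h₂.1.contDiffOn_two) (h₁.2.1.contDiffOn_two.sub h₂.2.1.contDiffOn_two)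
    (fun _ hy => h₁.laplacian_sub_fst_pos ha h₂ hy) (fun _ hy => h₁.laplacian_sub_snd_pos hb h₂ hy)
    (hd₁.1.sub hd₂.1) (hd₁.2.1.sub hd₂.2.1) hzero₁ hzero₂ hz
  simpa only [max_le_iff, sub_nonpos] using h

theorem IsTodaSol.eq_of_hasAsymData {γ δ : ℝ} (ha : 0 < a) (hb : 0 < b)
    (h₁ : IsTodaSol a b u₁ v₁) (h₂ : IsTodaSol a b u₂ v₂)
    (hd₁ : HasAsymData γ δ u₁ v₁) (hd₂ : HasAsymData γ δ u₂ v₂) {z : ℂ} (hz : z ≠ 0) :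
    u₁ z = u₂ z ∧ v₁ z = v₂ z :=
  have h₁₂ := h₁.le_of_hasAsymData ha hb h₂ hd₁ hd₂ hz
  have h₂₁ := h₂.le_of_hasAsymData ha hb h₁ hd₂ hd₁ hz
  ⟨le_antisymm h₁₂.1 h₂₁.1, le_antisymm h₁₂.2 h₂₁.2⟩

end Toda

section Isometry

variable (L : ℂ ≃ₗᵢ[ℝ] ℂ) {f : ℂ → ℝ}

theorem SmoothOffZero.comp_linearIsometryEquiv (hf : SmoothOffZero f) :
    SmoothOffZero (f ∘ L) :=
  hf.comp L.contDiff.contDiffOn fun _ hy => (map_ne_zero_iff L L.injective).2 hy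

theorem TendstoZeroAtInfty.comp_linearIsometryEquiv (hf : TendstoZeroAtInfty f) :
    TendstoZeroAtInfty (f ∘ L) :=
  hf.comp (tendsto_comap_iff.2 (by
    rw [show (‖·‖) ∘ L = (‖·‖) from funext L.norm_map]
    exact tendsto_comap))

theorem LogAsymAtZero.comp_linearIsometryEquiv {γ : ℝ} (hf : LogAsymAtZero γ f) :
    LogAsymAtZero γ (f ∘ L) := by
  have hL : Tendsto L (𝓝[≠] 0) (𝓝[≠] 0) := by
    simpa using L.continuous.continuousWithinAt.tendsto_nhdsWithin
      (fun _ hy => (map_ne_zero_iff L L.injective).2 hy) (x := 0) (s := {0}ᶜ)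
  simpa [LogAsymAtZero, Function.comp_def] using hf.comp hL

theorem IsTodaSol.comp_linearIsometryEquiv {a b : ℝ} {u v : ℂ → ℝ} (h : IsTodaSol a b u v) :
    IsTodaSol a b (u ∘ L) (v ∘ L) := by
  refine ⟨h.1.comp_linearIsometryEquiv L, h.2.1.comp_linearIsometryEquiv L, fun z hz => ?_⟩
  simp only [lap_comp_linearIsometryEquiv, Function.comp_apply]
  exact h.2.2 (L z) ((map_ne_zero_iff L L.injective).2 hz)

theorem HasAsymData.comp_linearIsometryEquiv {γ δ : ℝ} {u v : ℂ → ℝ} (h : HasAsymData γ δ u v) :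
    HasAsymData γ δ (u ∘ L) (v ∘ L) :=
  ⟨h.1.comp_linearIsometryEquiv L, h.2.1.comp_linearIsometryEquiv L,
    h.2.2.1.comp_linearIsometryEquiv L, h.2.2.2.comp_linearIsometryEquiv L⟩

end Isometry

theorem exists_rotation_apply_eq {z z' : ℂ} (hz : z ≠ 0) (h : ‖z‖ = ‖z'‖) :
    ∃ ω : Circle, rotation ω z = z' := by
  refine ⟨⟨z' / z, mem_sphere_zero_iff_norm.2 ?_⟩, div_mul_cancel₀ z' hz⟩
  rw [norm_div, ← h, div_self (norm_ne_zero_iff.2 hz)]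

theorem toda_solution_radial_general (a b γ δ : ℝ) (ha : 0 < a) (hb : 0 < b)
    (u v : ℂ → ℝ) (hsol : IsTodaSol a b u v) (hasym : HasAsymData γ δ u v) :
    ∀ z z' : ℂ, z ≠ 0 → ‖z‖ = ‖z'‖ →
      u z = u z' ∧ v z = v z' := by
  intro z z' hz hzz'
  obtain ⟨ω, rfl⟩ := exists_rotation_apply_eq hz hzz'
  exact hsol.eq_of_hasAsymData ha hb (hsol.comp_linearIsometryEquiv (rotation ω)) hasym
    (hasym.comp_linearIsometryEquiv (rotation ω)) hz

/-- The unique global solution with asymptotic data `(γ, δ)` is radial: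
`u` and `v` depend only on `|z|`. -/
theorem toda_solution_radial (a b γ δ : ℝ) (ha : 0 < a) (hb : 0 < b)
    (h1 : -2 / a ≤ γ) (h2 : δ ≤ 2 / b) (h3 : γ - δ ≤ 2)
    (u v : ℂ → ℝ) (hsol : IsTodaSol a b u v) (hasym : HasAsymData γ δ u v) :
    ∀ z z' : ℂ, z ≠ 0 → ‖z‖ = ‖z'‖ →
      u z = u z' ∧ v z = v z' :=
  toda_solution_radial_general a b γ δ ha hb u v hsol hasym
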